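/- Let F be a Veltman frame with forcing relation ⊩ and k ≥ 0. If x_{k+1} ⊩ U_{k+1} ∧ (D_{k+1} ▷ A), then there exist x_0, y_0, y_{k+1} such that B_k(x_{k+1}, x_0, y_0, y_{k+1}), x_0 R^C_⊩ y_0, and y_{k+1} ⊩ A. -/
import Mathlib


/-- Formulas of interpretability logic: propositional variables, ⊥, →, □, ▷. -/
inductive ILForm : Type
  | var : ℕ → ILForm
  | bot : ILForm
  | impl : ILForm → ILForm → ILForm
  | box : ILForm → ILForm
  | rhd : ILForm → ILForm → ILForm
  deriving DecidableEq

namespace ILForm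

def neg (A : ILForm) : ILForm := impl A bot
def top : ILForm := neg bot
def conj (A B : ILForm) : ILForm := neg (impl A (neg B))
def disj (A B : ILForm) : ILForm := impl (neg A) B
def dia (A : ILForm) : ILForm := neg (box (neg A))

end ILForm

infixr:30 " ⟹ " => ILForm.impl
infixl:65 " ⋀ " => ILForm.conj
infixl:64 " ⋁ " => ILForm.disj
infix:50 " ▷ " => ILForm.rhd
prefix:70 "□" => ILForm.box
prefix:70 "◇" => ILForm.dia
prefix:70 "∼" => ILForm.neg

/-- Propositional evaluation of a formula, treating boxed and ▷-formulas
(and variables) as atoms evaluated by `g`.  A formula is an instance of a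
propositional tautology iff it evaluates to `true` under every such `g`. -/
def ILForm.evalProp (g : ILForm → Bool) : ILForm → Bool
  | .bot => false
  | .impl a b => !(ILForm.evalProp g a) || ILForm.evalProp g b
  | f => g f

/-- Hilbert-style provability in the interpretability logic IL extended with
an additional set `Ax` of axioms. -/
inductive ILProv (Ax : Set ILForm) : ILForm → Prop
  | ax {A : ILForm} : A ∈ Ax → ILProv Ax A
  | taut {A : ILForm} : (∀ g : ILForm → Bool, A.evalProp g = true) → ILProv Ax A
  | L1 (A B : ILForm) : ILProv Ax ((□(A ⟹ B)) ⟹ ((□A) ⟹ (□B)))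
  | L2 (A : ILForm) : ILProv Ax ((□A) ⟹ (□□A))
  | L3 (A : ILForm) : ILProv Ax ((□((□A) ⟹ A)) ⟹ (□A))
  | J1 (A B : ILForm) : ILProv Ax ((□(A ⟹ B)) ⟹ (A ▷ B))
  | J2 (A B C : ILForm) : ILProv Ax (((A ▷ B) ⋀ (B ▷ C)) ⟹ (A ▷ C))
  | J3 (A B C : ILForm) : ILProv Ax (((A ▷ C) ⋀ (B ▷ C)) ⟹ ((A ⋁ B) ▷ C))
  | J4 (A B : ILForm) : ILProv Ax ((A ▷ B) ⟹ ((◇A) ⟹ (◇B)))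
  | J5 (A : ILForm) : ILProv Ax ((◇A) ▷ A)
  | mp {A B : ILForm} : ILProv Ax (A ⟹ B) → ILProv Ax A → ILProv Ax B
  | nec {A : ILForm} : ILProv Ax A → ILProv Ax (□A)

/-- Substitution of formulas for propositional variables. -/
def ILForm.substVar (σ : ℕ → ILForm) : ILForm → ILForm
  | .var n => σ n
  | .bot => .bot
  | .impl a b => .impl (ILForm.substVar σ a) (ILForm.substVar σ b)
  | .box a => .box (ILForm.substVar σ a)
  | .rhd a b => .rhd (ILForm.substVar σ a) (ILForm.substVar σ b)

/-- All substitution instances of a modal scheme. -/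
def instancesOf (A : ILForm) : Set ILForm := {B | ∃ σ : ℕ → ILForm, B = ILForm.substVar σ A}

/-- Helper for simultaneous replacement of subformula occurrences. -/
def ILForm.hit (ps : List (ILForm × ILForm)) (f : ILForm) : Option ILForm :=
  (ps.find? fun pq => decide (pq.1 = f)).map (·.2)

/-- Simultaneous replacement of (outermost) occurrences of the patterns
`p` by the corresponding `q`, for `(p,q)` in the list `ps`. -/
def ILForm.replL (ps : List (ILForm × ILForm)) : ILForm → ILForm
  | .var n => (ILForm.hit ps (.var n)).getD (.var n)
  | .bot => (ILForm.hit ps .bot).getD .bot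
  | .impl a b =>
      (ILForm.hit ps (.impl a b)).getD (.impl (ILForm.replL ps a) (ILForm.replL ps b))
  | .box a => (ILForm.hit ps (.box a)).getD (.box (ILForm.replL ps a))
  | .rhd a b =>
      (ILForm.hit ps (.rhd a b)).getD (.rhd (ILForm.replL ps a) (ILForm.replL ps b))

/-- The placeholder variables `A_n`, `B_n`, `C_n`, `E_n`. -/
def Av (n : ℕ) : ILForm := .var (4*n)
def Bv (n : ℕ) : ILForm := .var (4*n+1)
def Cv (n : ℕ) : ILForm := .var (4*n+2)
def Ev (n : ℕ) : ILForm := .var (4*n+3)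

/-- The slim series `R_n`, defined by the substitutions of the paper:
`R_0 := A_0▷B_0 → ¬(A_0▷¬C_0) ▷ B_0∧□C_0`;
`R_{2n+1} := R_{2n}[¬(A_n▷¬C_n)/¬(A_n▷¬C_n)∧(E_{n+1}▷◇A_{n+1});
                    B_n∧□C_n/B_n∧□C_n∧(E_{n+1}▷A_{n+1})]`;
`R_{2n+2} := R_{2n+1}[B_n/B_n∧(A_{n+1}▷B_{n+1}); ◇A_{n+1}/¬(A_{n+1}▷¬C_{n+1});
     (E_{n+1}▷A_{n+1})/(E_{n+1}▷A_{n+1})∧(E_{n+1}▷B_{n+1}∧□C_{n+1})]`. -/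
def Rser : ℕ → ILForm
  | 0 => (Av 0 ▷ Bv 0) ⟹ ((∼(Av 0 ▷ (∼(Cv 0)))) ▷ ((Bv 0) ⋀ (□(Cv 0))))
  | n+1 =>
    let k := n / 2
    if n % 2 = 0 then
      ILForm.replL
        [ (∼(Av k ▷ (∼(Cv k))), (∼(Av k ▷ (∼(Cv k)))) ⋀ (Ev (k+1) ▷ (◇(Av (k+1))))),
          ((Bv k) ⋀ (□(Cv k)), ((Bv k) ⋀ (□(Cv k))) ⋀ (Ev (k+1) ▷ Av (k+1))) ]
        (Rser n)
    else
      ILForm.replL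
        [ (Bv k, (Bv k) ⋀ (Av (k+1) ▷ Bv (k+1))),
          (◇(Av (k+1)), ∼(Av (k+1) ▷ (∼(Cv (k+1))))),
          (Ev (k+1) ▷ Av (k+1),
            (Ev (k+1) ▷ Av (k+1)) ⋀ (Ev (k+1) ▷ ((Bv (k+1)) ⋀ (□(Cv (k+1)))))) ]
        (Rser n)

/-- The formulas `X_n` of the well-behaved subhierarchy. -/
def Xt (A B : ℕ → ILForm) : ℕ → ILForm
  | 0 => A 0 ▷ B 0
  | n+1 => A (n+1) ▷ ((B (n+1)) ⋀ (Xt A B n))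

/-- The formulas `Y_n` of the well-behaved subhierarchy. -/
def Yt (A C E : ℕ → ILForm) : ℕ → ILForm
  | 0 => ∼(A 0 ▷ (∼(C 0)))
  | n+1 => (∼(A (n+1) ▷ (∼(C (n+1))))) ⋀ (E (n+1) ▷ (Yt A C E n))

/-- The formulas `Z_n` of the well-behaved subhierarchy. -/
def Zt (A B C E : ℕ → ILForm) : ℕ → ILForm
  | 0 => (B 0) ⋀ (□(C 0))
  | n+1 => (((B (n+1)) ⋀ (Xt A B n)) ⋀ (□(C (n+1)))) ⋀
             ((E (n+1) ▷ A n) ⋀ (E (n+1) ▷ (Zt A B C E n)))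

/-- The principles `R̃_n = X_n → Y_n ▷ Z_n`. -/
def Rtilde (A B C E : ℕ → ILForm) (n : ℕ) : ILForm :=
  (Xt A B n) ⟹ ((Yt A C E n) ▷ (Zt A B C E n))

/-- `X_{k-1}`, with the convention `X_{-1} = ⊤`. -/
def Xminus (A B : ℕ → ILForm) : ℕ → ILForm
  | 0 => ILForm.top
  | n+1 => Xt A B n

/-- `A_{k-1}`, with the convention `A_{-1} = ⊤`. -/
def Aminus (A : ℕ → ILForm) : ℕ → ILForm
  | 0 => ILForm.top
  | n+1 => A n

/-- `Z_{k-1}`, with the convention `Z_{-1} = ⊤`. -/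
def Zminus (A B C E : ℕ → ILForm) : ℕ → ILForm
  | 0 => ILForm.top
  | n+1 => Zt A B C E n

/-- Veltman frames. -/
structure Veltman where
  W : Type
  ne : Nonempty W
  R : W → W → Prop
  S : W → W → W → Prop
  R_trans : ∀ {x y z}, R x y → R y z → R x z
  R_cwf : WellFounded (fun x y => R y x)
  S_dom : ∀ {x y z}, S x y z → R x y ∧ R x z
  S_refl : ∀ {x y}, R x y → S x y y
  S_trans : ∀ {x y z u}, S x y z → S x z u → S x y u
  R_sub_S : ∀ {x y z}, R x y → R y z → S x y z

/-- Forcing in a Veltman model. -/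
def force (F : Veltman) (V : ℕ → F.W → Prop) : ILForm → F.W → Prop
  | .var n => fun w => V n w
  | .bot => fun _ => False
  | .impl a b => fun w => force F V a w → force F V b w
  | .box a => fun w => ∀ v, F.R w v → force F V a v
  | .rhd a b => fun w => ∀ v, F.R w v → force F V a v →
      ∃ u, F.S w v u ∧ force F V b u

/-- A formula is valid on a frame if it is forced at every world under every valuation. -/
def valid (F : Veltman) (A : ILForm) : Prop := ∀ (V : ℕ → F.W → Prop) (w : F.W), force F V A w

/-- The `C`-assuring successor relation `x R^C_⊩ y`. -/
def RC (F : Veltman) (V : ℕ → F.W → Prop) (C : ILForm) (x y : F.W) : Prop :=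
  F.R x y ∧ force F V C y ∧ ∀ z, F.S x y z → force F V C z

/-- The ternary relations `G_n` on a Veltman frame. -/
def G (F : Veltman) : ℕ → F.W → F.W → F.W → Prop
  | 0 => fun x y z => ∀ u, F.R z u → F.S x y u
  | n+1 => fun x y z => ∀ u, F.R z u → F.S x y u ∧ ∀ v, F.S x u v → G F n z u v

/-- The frame conditions `F_n` of the slim hierarchy. -/
def Fcond (F : Veltman) (n : ℕ) : Prop :=
  ∀ w x y z, F.R w x → F.R x y → F.S w y z → G F n x y z

/-- The quaternary relations `B_n` on a Veltman frame. -/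
def Bq (F : Veltman) : ℕ → F.W → F.W → F.W → F.W → Prop
  | 0 => fun x1 x0 y0 y1 => F.R x1 x0 ∧ F.R x0 y0 ∧ F.S x1 y0 y1
  | n+1 => fun x' x0 y0 y' => ∃ xn yn, F.R x' xn ∧ Bq F n xn x0 y0 yn ∧ F.S x' yn y'

/-- The formulas `U_n` of the broad series (with `U_0 := ⊤`, unused). -/
def Ubr (C : ILForm) (D : ℕ → ILForm) : ℕ → ILForm
  | 0 => ILForm.top
  | 1 => ◇(∼(D 1 ▷ (∼C)))
  | n+2 => ◇(((D (n+1)) ▷ (D (n+2))) ⋀ (Ubr C D (n+1)))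

/-- The frame conditions `F^n` of the broad series. -/
def FbroadCond (F : Veltman) (n : ℕ) : Prop :=
  ∀ x1 x0 y0 y1, Bq F n x1 x0 y0 y1 → ∀ u, F.R y1 u → F.S x0 y0 u

/-- The principles `R^n` of the broad series. -/
def Rbroad (A B C : ILForm) (D : ℕ → ILForm) : ℕ → ILForm
  | 0 => (A ▷ B) ⟹ ((∼(A ▷ (∼C))) ▷ (B ⋀ (□C)))
  | n+1 => (A ▷ B) ⟹ (((Ubr C D (n+1)) ⋀ (D (n+1) ▷ A)) ▷ (B ⋀ (□C)))


lemma force_conj (F : Veltman) (V : ℕ → F.W → Prop) (P Q : ILForm) (x : F.W) :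
    force F V (P ⋀ Q) x ↔ force F V P x ∧ force F V Q x := by
  show ((force F V P x → (force F V Q x → False)) → False) ↔ _
  tauto

lemma force_dia (F : Veltman) (V : ℕ → F.W → Prop) (P : ILForm) (x : F.W) :
    force F V (◇P) x ↔ ∃ v, F.R x v ∧ force F V P v := by
  show ((∀ v, F.R x v → (force F V P v → False)) → False) ↔ _
  constructor
  · intro h
    by_contra hc
    push_neg at hc
    exact h (fun v hr hp => hc v hr hp)
  · rintro ⟨v, hr, hp⟩ h
    exact h v hr hp

/-- if `x_{k+1} ⊩ U_{k+1} ∧ (D_{k+1} ▷ A)` then there are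
`x₀, y₀, y_{k+1}` with `B_k(x_{k+1},x₀,y₀,y_{k+1})`, `x₀ R^C y₀`, and `y_{k+1} ⊩ A`. -/
theorem stmt12 (F : Veltman) (V : ℕ → F.W → Prop) (C A : ILForm) (D : ℕ → ILForm)
    (k : ℕ) (x : F.W)
    (h : force F V ((Ubr C D (k+1)) ⋀ (D (k+1) ▷ A)) x) :
    ∃ x0 y0 y1 : F.W, Bq F k x x0 y0 y1 ∧ RC F V C x0 y0 ∧ force F V A y1 := by
  induction k generalizing A x with
  | zero =>
    rw [force_conj] at h
    obtain ⟨hU, hDA⟩ := h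
    rw [show Ubr C D 1 = ◇(∼(D 1 ▷ (∼C))) from rfl, force_dia] at hU
    obtain ⟨x0, hxx0, hx0⟩ := hU
    -- hx0 : ¬ force (D 1 ▷ ¬C) x0
    have : ¬ ∀ v, F.R x0 v → force F V (D 1) v → ∃ u, F.S x0 v u ∧ ¬ force F V C u := by
      intro hc
      exact hx0 (fun v hr hd => by
        obtain ⟨u, hs, hnc⟩ := hc v hr hd
        exact ⟨u, hs, fun hcu => hnc hcu⟩)
    push_neg at this
    obtain ⟨y0, hx0y0, hd, hC⟩ := this
    have hRC : RC F V C x0 y0 :=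
      ⟨hx0y0, hC y0 (F.S_refl hx0y0), fun z hz => hC z hz⟩
    obtain ⟨y1, hs, hA⟩ := hDA y0 (F.R_trans hxx0 hx0y0) hd
    exact ⟨x0, y0, y1, ⟨hxx0, hx0y0, hs⟩, hRC, hA⟩
  | succ k ih =>
    rw [force_conj] at h
    obtain ⟨hU, hDA⟩ := h
    rw [show Ubr C D (k+2) = ◇(((D (k+1)) ▷ (D (k+2))) ⋀ (Ubr C D (k+1))) from rfl,
      force_dia] at hU
    obtain ⟨x', hxx', hx'⟩ := hU
    rw [force_conj] at hx'
    obtain ⟨hDD, hU'⟩ := hx'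
    obtain ⟨x0, y0, y', hB, hRC, hD2⟩ :=
      ih (D (k+2)) x' ((force_conj F V _ _ x').mpr ⟨hU', hDD⟩)
    have hRxy' : F.R x y' := by
      rcases k with _ | k
      · exact F.R_trans hxx' (F.S_dom hB.2.2).2
      · obtain ⟨xn, yn, hr, _, hs⟩ := hB
        exact F.R_trans hxx' (F.S_dom hs).2
    obtain ⟨y1, hs, hA⟩ := hDA y' hRxy' hD2
    exact ⟨x0, y0, y1, ⟨x', y', hxx', hB, hs⟩, hRC, hA⟩
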